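/- Expected number of isolated nodes: In the homogeneous binary MAG model M(n;L), the expected number of isolated nodes is E[I_n(L)] = n Σ_{ℓ=0}^{L} C(L,ℓ) μ(1)^ℓ μ(0)^{L−ℓ} (1 − Γ(1)^ℓ Γ(0)^{L−ℓ})^{n−1}. -/

import Mathlib

open MeasureTheory Filter

/-- Bernoulli measure on `Bool` with parameter `p` = probability of `true`. -/
noncomputable def bern (p : ℝ) : Measure Bool :=
  (Real.toNNReal p) • Measure.dirac true + (Real.toNNReal (1 - p)) • Measure.dirac false

/-- Uniform distribution on `[0,1]`. -/
noncomputable def unif01 : Measure ℝ := MeasureTheory.volume.restrict (Set.Icc (0:ℝ) 1)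

/-- The probability space of the homogeneous binary MAG model `M(n;L)`:
i.i.d. Bernoulli attribute bits and, independently, i.i.d. Uniform(0,1) variables. -/
noncomputable def magMeasure (n L : ℕ) (p : ℝ) :
    Measure ((Fin n → Fin L → Bool) × (Fin n × Fin n → ℝ)) :=
  (Measure.pi fun _ : Fin n => Measure.pi fun _ : Fin L => bern p).prod
    (Measure.pi fun _ : Fin n × Fin n => unif01)

/-- `Q_L(a,b) = ∏_{ℓ} q(a_ℓ, b_ℓ)`. -/
def QL {L : ℕ} (q : Bool → Bool → ℝ) (a b : Fin L → Bool) : ℝ :=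
  ∏ ℓ : Fin L, q (a ℓ) (b ℓ)

/-- Distinct nodes `u, v` are adjacent iff `U(u,v) ≤ Q_L(A(u),A(v))`, where the uniform
variable attached to the unordered pair `{u,v}` is the one indexed by `(min u v, max u v)`. -/
def Adj {n L : ℕ} (q : Bool → Bool → ℝ)
    (ω : (Fin n → Fin L → Bool) × (Fin n × Fin n → ℝ)) (u v : Fin n) : Prop :=
  u ≠ v ∧ ω.2 (min u v, max u v) ≤ QL q (ω.1 u) (ω.1 v)

/-- Node `u` is isolated if it is adjacent to no other node. -/
def Isolated {n L : ℕ} (q : Bool → Bool → ℝ)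
    (ω : (Fin n → Fin L → Bool) × (Fin n × Fin n → ℝ)) (u : Fin n) : Prop :=
  ∀ v, ¬ Adj q ω u v

/-- `S_L(u)`: the number of attributes exhibited by node `u`. -/
def Scount {n L : ℕ} (ω : (Fin n → Fin L → Bool) × (Fin n × Fin n → ℝ)) (u : Fin n) : ℕ :=
  (Finset.univ.filter fun ℓ : Fin L => ω.1 u ℓ = true).card

open scoped Classical in
/-- `I_n(L)`: the number of isolated nodes. -/
noncomputable def numIsolated {n L : ℕ} (q : Bool → Bool → ℝ)
    (ω : (Fin n → Fin L → Bool) × (Fin n × Fin n → ℝ)) : ℕ :=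
  (Finset.univ.filter fun u : Fin n => Isolated q ω u).card

open scoped Classical in
/-- `I_n^{(k)}(L)`: the number of isolated nodes `u` with `S_L(u) = k`. -/
noncomputable def numIsolatedWith {n L : ℕ} (q : Bool → Bool → ℝ) (k : ℕ)
    (ω : (Fin n → Fin L → Bool) × (Fin n × Fin n → ℝ)) : ℕ :=
  (Finset.univ.filter fun u : Fin n => Isolated q ω u ∧ Scount ω u = k).card

open scoped Classical in
/-- `ξ^{(k)}(u)`: the indicator that node `u` is isolated and `S_L(u) = k`. -/
noncomputable def xiInd {n L : ℕ} (q : Bool → Bool → ℝ) (k : ℕ)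
    (ω : (Fin n → Fin L → Bool) × (Fin n × Fin n → ℝ)) (u : Fin n) : ℝ :=
  if Isolated q ω u ∧ Scount ω u = k then 1 else 0

/-- `Γ(a) = μ(0) q(a,0) + μ(1) q(a,1)`, with `μ(1) = μ1`, `μ(0) = 1 - μ1`. -/
def Gam (μ1 : ℝ) (q : Bool → Bool → ℝ) (a : Bool) : ℝ :=
  (1 - μ1) * q a false + μ1 * q a true

/-- A scaling `L : ℕ → ℕ` is `ρ`-admissible if `L_n ~ ρ ln n` as `n → ∞`. -/
def Admissible (ρ : ℝ) (L : ℕ → ℕ) : Prop :=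
  Asymptotics.IsEquivalent Filter.atTop (fun n => (L n : ℝ)) (fun n => ρ * Real.log n)

/-- `G(ν,μ) = (μ/ν)^ν ((1-μ)/(1-ν))^{1-ν}` (real powers; the conventions at `ν = 0,1`
agree with the continuous extension). -/
noncomputable def Gfun (ν μ : ℝ) : ℝ :=
  (μ / ν) ^ ν * ((1 - μ) / (1 - ν)) ^ (1 - ν)

/-- `Q*_L(a) = E[Q_L(a,A)]`, `A` a vector of `L` i.i.d. Bernoulli(μ1) bits. -/
noncomputable def Qstar {L : ℕ} (μ1 : ℝ) (q : Bool → Bool → ℝ) (a : Fin L → Bool) : ℝ :=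
  ∫ b, QL q a b ∂(Measure.pi fun _ : Fin L => bern μ1)

/-- `Q**_L(a,b) = E[Q_L(a,A) Q_L(b,A)]`. -/
noncomputable def Qstarstar {L : ℕ} (μ1 : ℝ) (q : Bool → Bool → ℝ) (a b : Fin L → Bool) : ℝ :=
  ∫ c, QL q a c * QL q b c ∂(Measure.pi fun _ : Fin L => bern μ1)

/-- `Q̃_L(a,b) = Q*_L(a) + Q*_L(b) − Q**_L(a,b)`. -/
noncomputable def Qtilde {L : ℕ} (μ1 : ℝ) (q : Bool → Bool → ℝ) (a b : Fin L → Bool) : ℝ :=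
  Qstar μ1 q a + Qstar μ1 q b - Qstarstar μ1 q a b

/-! By linearity, `E[I_n(L)]` is the sum over nodes `u` of the probability that `u` is isolated.
Given the attributes, the uniforms attached to the pairs `{u, v}`, `v ≠ u`, are distinct
coordinates, so `u` is isolated with probability `∏_{v ≠ u} (1 - Q_L(A(u), A(v)))`.
Conditioning on `A(u) = c`, the `A(v)` are i.i.d., which turns this into
`(1 - Q*_L(c))^(n-1)` with `Q*_L(c) = ∏_ℓ Γ(c_ℓ) = Γ(1)^S Γ(0)^(L-S)`, `S` the number of
attributes of `c`; finally `S` is Binomial(`L`, `μ(1)`). -/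

open Finset

lemma prod_comp_bool {ι M : Type*} [Fintype ι] [CommMonoid M] (g : Bool → M) (c : ι → Bool) :
    ∏ i, g (c i) = g true ^ #{i | c i} * g false ^ (Fintype.card ι - #{i | c i}) := by
  classical
  have hg : ∀ i, g (c i) = if c i then g true else g false := fun i => by cases c i <;> rfl
  rw [prod_congr rfl fun i _ => hg i, prod_ite, prod_const, prod_const, ← card_univ,
    ← card_filter_add_card_filter_not (s := univ) (fun i => c i = true), Nat.add_sub_cancel_left]

lemma sum_fun_bool_apply_card {ι M : Type*} [Fintype ι] [DecidableEq ι] [AddCommMonoid M]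
    (f : ℕ → M) :
    ∑ c : ι → Bool, f #{i | c i}
      = ∑ k ∈ range (Fintype.card ι + 1), (Fintype.card ι).choose k • f k := by
  rw [← card_univ, ← sum_powerset_apply_card, powerset_univ]
  refine sum_nbij' (fun c => ({i | c i} : Finset ι)) (fun s i => decide (i ∈ s))
    ?_ ?_ ?_ ?_ ?_ <;> simp

lemma injOn_min_max {α : Type*} [LinearOrder α] (u : α) :
    Set.InjOn (fun v => (min u v, max u v)) {u}ᶜ := by
  intro v hv w hw h
  simp only [Prod.mk.injEq, Set.mem_compl_singleton_iff] at h hv hw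
  grind

theorem MeasureTheory.Measure.pi_setOf_forall_mem_comp {ι κ X : Type*} [Fintype ι]
    [MeasurableSpace X] (μ : ι → Measure X) [∀ i, IsProbabilityMeasure (μ i)] {s : Finset κ}
    {e : κ → ι} (he : Set.InjOn e s) (A : κ → Set X) :
    Measure.pi μ {U | ∀ k ∈ s, U (e k) ∈ A k} = ∏ k ∈ s, μ (e k) (A k) := by
  classical
  set F : ι → Set X := fun i => {x | ∀ k ∈ s, e k = i → x ∈ A k}
  have hbox : {U : ι → X | ∀ k ∈ s, U (e k) ∈ A k} = Set.pi Set.univ F := by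
    ext U
    simp only [Set.mem_ofPred_eq, Set.mem_pi, Set.mem_univ, true_implies, F]
    exact ⟨fun h i k hk hki => hki ▸ h k hk, fun h k hk => h (e k) k hk rfl⟩
  rw [hbox, Measure.pi_pi, ← prod_subset (subset_univ (s.image e)), prod_image he]
  · refine prod_congr rfl fun k hk => congrArg _ ?_
    ext x
    exact ⟨fun h => h k hk rfl, fun hx k' hk' hkk' => he hk' hk hkk' ▸ hx⟩
  · intro i _ hi
    have : F i = Set.univ := by
      ext x
      simp only [Set.mem_ofPred_eq, Set.mem_univ, iff_true, F]
      exact fun k hk hki => absurd (mem_image.2 ⟨k, hk, hki⟩) hi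
    rw [this, measure_univ]

theorem integral_pi_prod_erase {ι X : Type*} [Fintype ι] [DecidableEq ι] [Fintype X]
    [MeasurableSpace X] [MeasurableSingletonClass X] (ν : Measure X) [IsFiniteMeasure ν]
    (f : X → X → ℝ) (u : ι) :
    ∫ a, ∏ v ∈ univ.erase u, f (a u) (a v) ∂(Measure.pi fun _ => ν)
      = ∫ c, (∫ x, f c x ∂ν) ^ (Fintype.card ι - 1) ∂ν := by
  classical
  -- condition on the value `c` of `a u`
  let g (c : X) (v : ι) (x : X) : ℝ := if v = u then (if x = c then 1 else 0) else f c x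
  have hsplit (a : ι → X) : ∏ v ∈ univ.erase u, f (a u) (a v) = ∑ c, ∏ v, g c v (a v) := by
    have (c : X) : ∏ v, g c v (a v) = if a u = c then ∏ v ∈ univ.erase u, f c (a v) else 0 := by
      rw [← mul_prod_erase univ _ (mem_univ u),
        prod_congr rfl fun v hv => if_neg (ne_of_mem_erase hv)]
      split_ifs <;> simp_all [g]
    simp_rw [this, sum_ite_eq, mem_univ, if_true]
  have hfactor (c : X) :
      ∏ v, ∫ x, g c v x ∂ν = ν.real {c} * (∫ x, f c x ∂ν) ^ (Fintype.card ι - 1) := by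
    have hu : ∫ x, g c u x ∂ν = ν.real {c} := by
      simp [g, integral_fintype Integrable.of_finite]
    have hv (v) (hv : v ∈ univ.erase u) : ∫ x, g c v x ∂ν = ∫ x, f c x ∂ν := by
      simp [g, ne_of_mem_erase hv]
    rw [← mul_prod_erase univ _ (mem_univ u), hu, prod_congr rfl hv, prod_const,
      card_erase_of_mem (mem_univ u), card_univ]
  simp_rw [hsplit]
  rw [integral_finsetSum _ fun c _ => Integrable.of_finite, integral_fintype Integrable.of_finite]
  simp_rw [integral_fintype_prod_eq_prod, hfactor, smul_eq_mul]

section Bernoulli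

variable {p : ℝ}

lemma bern_real_singleton (hp₀ : 0 ≤ p) (hp₁ : p ≤ 1) (b : Bool) :
    (bern p).real {b} = if b then p else 1 - p := by
  cases b <;> simp [bern, measureReal_def, hp₀, hp₁]

lemma isProbabilityMeasure_bern (hp₀ : 0 ≤ p) (hp₁ : p ≤ 1) :
    IsProbabilityMeasure (bern p) := by
  constructor
  simp only [bern, Measure.coe_add, Measure.coe_smul, Pi.add_apply, Pi.smul_apply, measure_univ,
    ENNReal.smul_def, smul_eq_mul, mul_one]
  rw [← ENNReal.coe_add, ← Real.toNNReal_add hp₀ (by linarith)]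
  simp

lemma integral_bern (hp₀ : 0 ≤ p) (hp₁ : p ≤ 1) (g : Bool → ℝ) :
    ∫ b, g b ∂bern p = (1 - p) * g false + p * g true := by
  have := isProbabilityMeasure_bern hp₀ hp₁
  simp [integral_fintype Integrable.of_finite, bern_real_singleton hp₀ hp₁, add_comm]

lemma integral_pi_bern_comp_card {ι : Type*} [Fintype ι] [DecidableEq ι] (hp₀ : 0 ≤ p)
    (hp₁ : p ≤ 1) (φ : ℕ → ℝ) :
    ∫ c, φ #{i | c i} ∂(Measure.pi fun _ : ι => bern p)
      = ∑ k ∈ range (Fintype.card ι + 1),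
          (Fintype.card ι).choose k * p ^ k * (1 - p) ^ (Fintype.card ι - k) * φ k := by
  have := isProbabilityMeasure_bern hp₀ hp₁
  have hweight (c : ι → Bool) : (Measure.pi fun _ : ι => bern p).real {c}
      = p ^ #{i | c i} * (1 - p) ^ (Fintype.card ι - #{i | c i}) := by
    rw [measureReal_def, Measure.pi_singleton, ENNReal.toReal_prod]
    simp_rw [← measureReal_def, bern_real_singleton hp₀ hp₁]
    exact prod_comp_bool (fun b => if b then p else 1 - p) c
  rw [integral_fintype Integrable.of_finite]
  simp_rw [hweight, smul_eq_mul]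
  rw [sum_fun_bool_apply_card (fun k => p ^ k * (1 - p) ^ (Fintype.card ι - k) * φ k)]
  simp_rw [nsmul_eq_mul, mul_assoc]

end Bernoulli

lemma Qstar_eq_prod_Gam {L : ℕ} {μ1 : ℝ} (hμ₀ : 0 ≤ μ1) (hμ₁ : μ1 ≤ 1) (q : Bool → Bool → ℝ)
    (a : Fin L → Bool) : Qstar μ1 q a = ∏ ℓ, Gam μ1 q (a ℓ) := by
  have := isProbabilityMeasure_bern hμ₀ hμ₁
  simp_rw [Qstar, QL]
  rw [integral_fintype_prod_eq_prod fun ℓ b => q (a ℓ) b]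
  simp_rw [integral_bern hμ₀ hμ₁, Gam]

lemma unif01_real_Ioi {t : ℝ} (h₀ : 0 ≤ t) (h₁ : t ≤ 1) : unif01.real (Set.Ioi t) = 1 - t := by
  have : Set.Ioi t ∩ Set.Icc 0 1 = Set.Ioc t 1 := by
    ext x
    simp only [Set.mem_inter_iff, Set.mem_Ioi, Set.mem_Icc, Set.mem_Ioc]
    grind
  rw [unif01, measureReal_restrict_apply measurableSet_Ioi, this, Real.volume_real_Ioc_of_le h₁]

instance isProbabilityMeasure_unif01 : IsProbabilityMeasure unif01 := ⟨by simp [unif01]⟩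

section Isolated

variable {n L : ℕ} {q : Bool → Bool → ℝ}

lemma QL_nonneg (hq₀ : ∀ a b, 0 ≤ q a b) (a b : Fin L → Bool) : 0 ≤ QL q a b :=
  prod_nonneg fun _ _ => hq₀ _ _

lemma QL_le_one (hq₀ : ∀ a b, 0 ≤ q a b) (hq₁ : ∀ a b, q a b ≤ 1) (a b : Fin L → Bool) :
    QL q a b ≤ 1 :=
  prod_le_one (fun _ _ => hq₀ _ _) fun _ _ => hq₁ _ _

variable (q) in
lemma measurableSet_isolated (u : Fin n) :
    MeasurableSet {ω : (Fin n → Fin L → Bool) × (Fin n × Fin n → ℝ) | Isolated q ω u} := by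
  simp only [Isolated, Adj, Set.ofPred_forall]
  refine .iInter fun v => .compl (.inter (.const _)
    (measurableSet_le ((measurable_pi_apply _).comp measurable_snd) ?_))
  exact (measurable_of_countable fun a : Fin n → Fin L → Bool => QL q (a u) (a v)).comp
    measurable_fst

lemma measureReal_isolated_section (hq₀ : ∀ a b, 0 ≤ q a b) (hq₁ : ∀ a b, q a b ≤ 1)
    (a : Fin n → Fin L → Bool) (u : Fin n) :
    (Measure.pi fun _ : Fin n × Fin n => unif01).real {U | Isolated q (a, U) u}
      = ∏ v ∈ univ.erase u, (1 - QL q (a u) (a v)) := by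
  have hset : {U | Isolated q (a, U) u}
      = {U : Fin n × Fin n → ℝ | ∀ v ∈ univ.erase u,
          U (min u v, max u v) ∈ Set.Ioi (QL q (a u) (a v))} := by
    ext U
    simp [Isolated, Adj, ne_comm]
  have hinj : Set.InjOn (fun v => (min u v, max u v)) (univ.erase u : Finset (Fin n)) := by
    rw [coe_erase, coe_univ, ← Set.compl_eq_univ_sdiff]
    exact injOn_min_max u
  rw [hset, measureReal_def, Measure.pi_setOf_forall_mem_comp _ hinj, ENNReal.toReal_prod]
  exact prod_congr rfl fun v _ =>
    unif01_real_Ioi (QL_nonneg hq₀ _ _) (QL_le_one hq₀ hq₁ _ _)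

end Isolated

section Expectation

variable {n L : ℕ} {q : Bool → Bool → ℝ} {p : ℝ}

lemma isProbabilityMeasure_magMeasure (hp₀ : 0 ≤ p) (hp₁ : p ≤ 1) :
    IsProbabilityMeasure (magMeasure n L p) := by
  have := isProbabilityMeasure_bern hp₀ hp₁
  unfold magMeasure
  infer_instance

lemma integral_numIsolated (μ : Measure ((Fin n → Fin L → Bool) × (Fin n × Fin n → ℝ)))
    [IsFiniteMeasure μ] :
    ∫ ω, (numIsolated q ω : ℝ) ∂μ = ∑ u, μ.real {ω | Isolated q ω u} := by
  have hsum (ω : (Fin n → Fin L → Bool) × (Fin n × Fin n → ℝ)) :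
      (numIsolated q ω : ℝ) = ∑ u, {ω | Isolated q ω u}.indicator 1 ω := by
    rw [numIsolated, natCast_card_filter]
    rfl
  simp_rw [hsum]
  rw [integral_finsetSum _ fun u _ => (integrable_const 1).indicator (measurableSet_isolated q u)]
  simp_rw [integral_indicator_one (measurableSet_isolated q _)]

lemma measureReal_isolated (hp₀ : 0 ≤ p) (hp₁ : p ≤ 1) (hq₀ : ∀ a b, 0 ≤ q a b)
    (hq₁ : ∀ a b, q a b ≤ 1) (u : Fin n) :
    (magMeasure n L p).real {ω | Isolated q ω u}
      = ∫ a, ∏ v ∈ univ.erase u, (1 - QL q (a u) (a v))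
          ∂(Measure.pi fun _ : Fin n => Measure.pi fun _ : Fin L => bern p) := by
  have := isProbabilityMeasure_bern hp₀ hp₁
  have hmeas := measurableSet_isolated (L := L) q u
  rw [← integral_indicator_one hmeas, magMeasure,
    integral_prod _ ((integrable_const 1).indicator hmeas)]
  refine integral_congr_ae (ae_of_all _ fun a => ?_)
  dsimp only
  rw [← measureReal_isolated_section hq₀ hq₁ a u]
  exact integral_indicator_one (measurable_prodMk_left hmeas)

lemma integral_one_sub_QL (hp₀ : 0 ≤ p) (hp₁ : p ≤ 1) (a : Fin L → Bool) :
    ∫ b, (1 - QL q a b) ∂(Measure.pi fun _ : Fin L => bern p) = 1 - Qstar p q a := by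
  have := isProbabilityMeasure_bern hp₀ hp₁
  rw [integral_sub (integrable_const 1) Integrable.of_finite, integral_const, Qstar]
  simp

end Expectation

theorem mag_expected_number_of_isolated_nodes_general
    (n L : ℕ)
    (μ1 : ℝ) (hμ1 : 0 < μ1) (hμ1' : μ1 < 1)
    (q : Bool → Bool → ℝ) (hq : ∀ a b, 0 < q a b ∧ q a b < 1) :
    ∫ ω, (numIsolated q ω : ℝ) ∂(magMeasure n L μ1)
      = n * ∑ ℓ ∈ Finset.range (L + 1),
          (L.choose ℓ : ℝ) * μ1 ^ ℓ * (1 - μ1) ^ (L - ℓ) *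
            (1 - Gam μ1 q true ^ ℓ * Gam μ1 q false ^ (L - ℓ)) ^ (n - 1) := by
  have hμ₀ := hμ1.le
  have hμ₁ := hμ1'.le
  have hq₀ a b := (hq a b).1.le
  have hq₁ a b := (hq a b).2.le
  have := isProbabilityMeasure_bern hμ₀ hμ₁
  have := isProbabilityMeasure_magMeasure (n := n) (L := L) hμ₀ hμ₁
  calc ∫ ω, (numIsolated q ω : ℝ) ∂(magMeasure n L μ1)
      = ∑ _u : Fin n, ∫ c, (1 - Qstar μ1 q c) ^ (n - 1)
          ∂(Measure.pi fun _ : Fin L => bern μ1) := by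
        refine (integral_numIsolated _).trans (sum_congr rfl fun u _ => ?_)
        rw [measureReal_isolated hμ₀ hμ₁ hq₀ hq₁,
          integral_pi_prod_erase _ fun c b => 1 - QL q c b, Fintype.card_fin]
        simp_rw [integral_one_sub_QL hμ₀ hμ₁]
    _ = n * ∫ c, (1 - Gam μ1 q true ^ #{ℓ | c ℓ} * Gam μ1 q false ^ (L - #{ℓ | c ℓ})) ^ (n - 1)
          ∂(Measure.pi fun _ : Fin L => bern μ1) := by
        simp_rw [Qstar_eq_prod_Gam hμ₀ hμ₁, prod_comp_bool, sum_const, card_univ,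
          Fintype.card_fin, nsmul_eq_mul]
    _ = _ := by
        rw [integral_pi_bern_comp_card hμ₀ hμ₁ fun k =>
          (1 - Gam μ1 q true ^ k * Gam μ1 q false ^ (L - k)) ^ (n - 1), Fintype.card_fin]

theorem mag_expected_number_of_isolated_nodes
    (n L : ℕ) (hn : 2 ≤ n) (hL : 1 ≤ L)
    (μ1 : ℝ) (hμ1 : 0 < μ1) (hμ1' : μ1 < 1)
    (q : Bool → Bool → ℝ) (hq : ∀ a b, 0 < q a b ∧ q a b < 1)
    (hqsym : q false true = q true false) :
    ∫ ω, (numIsolated q ω : ℝ) ∂(magMeasure n L μ1)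
      = n * ∑ ℓ ∈ Finset.range (L + 1),
          (L.choose ℓ : ℝ) * μ1 ^ ℓ * (1 - μ1) ^ (L - ℓ) *
            (1 - Gam μ1 q true ^ ℓ * Gam μ1 q false ^ (L - ℓ)) ^ (n - 1) :=
  mag_expected_number_of_isolated_nodes_general n L μ1 hμ1 hμ1' q hq
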